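/- arXiv:2202.04598 — 3 statements merged into one kernel-verified Lean document; each statement's English description precedes it below -/
import Mathlib

section
/- Let f : ℝⁿ → ℝ be L-smooth and μ-strongly convex, and let 0 < η ≤ 1/L. Then for all x, y, ‖(x − η∇f(x)) − (y − η∇f(y))‖² ≤ (1 − ημ)‖x − y‖². -/
/-!
With `d = x - y` and `g = ∇f x - ∇f y`, the left side is `‖d‖² - 2η⟪g, d⟫ + η²‖g‖²`.
Strong convexity makes the gradient strongly monotone, `μ‖d‖² ≤ ⟪g, d⟫`, and a convex function
with `L`-Lipschitz gradient has a co-coercive gradient, `‖g‖² ≤ L⟪g, d⟫` (Baillon–Haddad). Since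
`ηL ≤ 1`, the term `η²‖g‖²` is absorbed by half of `2η⟪g, d⟫`, and the other half is at least
`ημ‖d‖²`. Co-coercivity comes from combining the first-order condition for convexity with the
descent lemma `f (x + v) ≤ f x + ⟪∇f x, v⟫ + L/2 ‖v‖²` at a gradient step.
-/

open scoped RealInnerProductSpace
open Set

section

variable {E : Type*} [NormedAddCommGroup E] [InnerProductSpace ℝ E]

theorem norm_sub_smul_sq_le_of_inner_bounds {d g : E} {L μ η : ℝ} (hμ : 0 ≤ μ) (hη : 0 ≤ η)
    (hηL : η * L ≤ 1) (hmono : μ * ‖d‖ ^ 2 ≤ ⟪g, d⟫) (hcoco : ‖g‖ ^ 2 ≤ L * ⟪g, d⟫) :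
    ‖d - η • g‖ ^ 2 ≤ (1 - η * μ) * ‖d‖ ^ 2 := by
  have hinner : 0 ≤ ⟪g, d⟫ := (by positivity : 0 ≤ μ * ‖d‖ ^ 2).trans hmono
  have hsq : η ^ 2 * ‖g‖ ^ 2 ≤ η * ⟪g, d⟫ := calc
    η ^ 2 * ‖g‖ ^ 2 ≤ η ^ 2 * (L * ⟪g, d⟫) := by gcongr
    _ = (η * L) * (η * ⟪g, d⟫) := by ring
    _ ≤ η * ⟪g, d⟫ := mul_le_of_le_one_left (by positivity) hηL
  calc ‖d - η • g‖ ^ 2 = ‖d‖ ^ 2 - 2 * (η * ⟪g, d⟫) + η ^ 2 * ‖g‖ ^ 2 := by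
        rw [norm_sub_sq_real, real_inner_smul_right, norm_smul, Real.norm_of_nonneg hη, mul_pow,
          real_inner_comm]
    _ ≤ (1 - η * μ) * ‖d‖ ^ 2 := by linarith [mul_le_mul_of_nonneg_left hmono hη]

variable [CompleteSpace E]

theorem HasGradientAt.hasDerivAt_comp_add_smul {h : E → ℝ} {x v g : E} {t : ℝ}
    (hg : HasGradientAt h g (x + t • v)) :
    HasDerivAt (fun s : ℝ ↦ h (x + s • v)) ⟪g, v⟫ t := by
  have hline : HasDerivAt (fun s : ℝ ↦ x + s • v) v t := by
    simpa using ((hasDerivAt_id t).smul_const v).const_add x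
  exact (hasGradientAt_iff_hasFDerivAt.mp hg).comp_hasDerivAt t hline

theorem ConvexOn.inner_le_sub_of_hasGradientAt {s : Set E} {h : E → ℝ} (hc : ConvexOn ℝ s h)
    {x y g : E} (hx : x ∈ s) (hy : y ∈ s) (hg : HasGradientAt h g x) :
    ⟪g, y - x⟫ ≤ h y - h x := by
  have hline := hc.comp_affineMap (AffineMap.lineMap (k := ℝ) x y)
  have hderiv : HasDerivAt (h ∘ AffineMap.lineMap (k := ℝ) x y) ⟪g, y - x⟫ 0 := by
    have := (HasGradientAt.hasDerivAt_comp_add_smul (v := y - x) (t := 0) (by simpa using hg))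
    convert this using 2 with s
    simp [AffineMap.lineMap_apply_module', add_comm]
  simpa [slope_def_field] using
    hline.le_slope_of_hasDerivAt (by simpa using hx) (by simpa using hy) zero_lt_one hderiv

theorem ConvexOn.inner_sub_nonneg_of_hasGradientAt {s : Set E} {h : E → ℝ} (hc : ConvexOn ℝ s h)
    {x y gx gy : E} (hx : x ∈ s) (hy : y ∈ s) (hgx : HasGradientAt h gx x)
    (hgy : HasGradientAt h gy y) :
    0 ≤ ⟪gx - gy, x - y⟫ := by
  have hxy := hc.inner_le_sub_of_hasGradientAt hx hy hgx
  have hyx := hc.inner_le_sub_of_hasGradientAt hy hx hgy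
  rw [← neg_sub, inner_neg_right] at hxy
  rw [inner_sub_left]
  linarith

theorem StrongConvexOn.mul_sq_le_inner_sub_of_hasGradientAt {s : Set E} {h : E → ℝ} {μ : ℝ}
    (hsc : StrongConvexOn s μ h) {x y gx gy : E} (hx : x ∈ s) (hy : y ∈ s)
    (hgx : HasGradientAt h gx x) (hgy : HasGradientAt h gy y) :
    μ * ‖x - y‖ ^ 2 ≤ ⟪gx - gy, x - y⟫ := by
  have hgrad {z g : E} (hg : HasGradientAt h g z) :
      HasGradientAt (fun w ↦ h w - μ / 2 * ‖w‖ ^ 2) (g - μ • z) z := by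
    rw [hasGradientAt_iff_hasFDerivAt] at hg ⊢
    refine (hg.sub ((hasStrictFDerivAt_norm_sq z).hasFDerivAt.const_mul (μ / 2))).congr_fderiv ?_
    ext w
    simp only [sub_apply, InnerProductSpace.toDual_apply_apply, smul_apply, coe_innerSL_apply,
      nsmul_eq_mul, map_sub, map_smul, smul_eq_mul, sub_right_inj]
    ring
  have := (strongConvexOn_iff_convex.mp hsc).inner_sub_nonneg_of_hasGradientAt hx hy
    (hgrad hgx) (hgrad hgy)
  rwa [sub_sub_sub_comm, ← smul_sub, inner_sub_left, real_inner_smul_left,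
    real_inner_self_eq_norm_sq, sub_nonneg] at this

theorem image_add_le_of_gradient_lipschitz {h : E → ℝ} {L : ℝ} (hdiff : Differentiable ℝ h)
    (hsmooth : ∀ x y, ‖gradient h x - gradient h y‖ ≤ L * ‖x - y‖) (x v : E) :
    h (x + v) ≤ h x + ⟪gradient h x, v⟫ + L / 2 * ‖v‖ ^ 2 := by
  set B : ℝ → ℝ := fun t ↦ h x + t * ⟪gradient h x, v⟫ + L / 2 * ‖v‖ ^ 2 * t ^ 2
  have hφ (t : ℝ) : HasDerivAt (fun s : ℝ ↦ h (x + s • v)) ⟪gradient h (x + t • v), v⟫ t :=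
    (hdiff _).hasGradientAt.hasDerivAt_comp_add_smul
  have hB (t : ℝ) : HasDerivAt B (⟪gradient h x, v⟫ + L * ‖v‖ ^ 2 * t) t := by
    refine ((((hasDerivAt_id t).mul_const ⟪gradient h x, v⟫).const_add (h x)).add
      ((hasDerivAt_pow 2 t).const_mul (L / 2 * ‖v‖ ^ 2))).congr_deriv (by
      simp only [one_mul, Nat.cast_ofNat, Nat.add_one_sub_one, pow_one, add_right_inj]; ring)
  have hderiv_le (t : ℝ) (ht : t ∈ Ico 0 1) :
      ⟪gradient h (x + t • v), v⟫ ≤ ⟪gradient h x, v⟫ + L * ‖v‖ ^ 2 * t := calc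
    ⟪gradient h (x + t • v), v⟫
        = ⟪gradient h x, v⟫ + ⟪gradient h (x + t • v) - gradient h x, v⟫ := by
      rw [inner_sub_left]; ring
    _ ≤ ⟪gradient h x, v⟫ + ‖gradient h (x + t • v) - gradient h x‖ * ‖v‖ := by
      gcongr; exact real_inner_le_norm _ _
    _ ≤ ⟪gradient h x, v⟫ + L * ‖t • v‖ * ‖v‖ := by
      gcongr; simpa using hsmooth (x + t • v) x
    _ = ⟪gradient h x, v⟫ + L * ‖v‖ ^ 2 * t := by
      rw [norm_smul, Real.norm_of_nonneg ht.1]; ring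
  have := image_le_of_deriv_right_le_deriv_boundary
    (HasDerivAt.continuousOn fun t _ ↦ hφ t) (fun t _ ↦ (hφ t).hasDerivWithinAt)
    (by simp [B]) (HasDerivAt.continuousOn fun t _ ↦ hB t) (fun t _ ↦ (hB t).hasDerivWithinAt)
    hderiv_le (right_mem_Icc.mpr zero_le_one)
  simpa [B] using this

theorem ConvexOn.add_inner_add_sq_gradient_sub_le {h : E → ℝ} {L : ℝ} (hL : 0 < L)
    (hc : ConvexOn ℝ univ h) (hdiff : Differentiable ℝ h)
    (hsmooth : ∀ x y, ‖gradient h x - gradient h y‖ ≤ L * ‖x - y‖) (a b : E) :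
    h a + ⟪gradient h a, b - a⟫ + 1 / (2 * L) * ‖gradient h b - gradient h a‖ ^ 2 ≤ h b := by
  set g := gradient h b - gradient h a
  set v := -(1 / L) • g
  -- convexity at `a` and the descent lemma at `b`, both evaluated at the gradient step `b + v`
  have hconv := hc.inner_le_sub_of_hasGradientAt (mem_univ a) (mem_univ (b + v))
    (hdiff a).hasGradientAt
  have hdesc := image_add_le_of_gradient_lipschitz hdiff hsmooth b v
  have hstep : ⟪gradient h b, v⟫ - ⟪gradient h a, v⟫ + L / 2 * ‖v‖ ^ 2
      = -(1 / (2 * L) * ‖g‖ ^ 2) := by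
    rw [← inner_sub_left, real_inner_smul_right, real_inner_self_eq_norm_sq, norm_smul, norm_neg,
      Real.norm_of_nonneg (by positivity)]
    field_simp
    ring
  have hsplit : ⟪gradient h a, b + v - a⟫ = ⟪gradient h a, b - a⟫ + ⟪gradient h a, v⟫ := by
    rw [add_sub_right_comm, inner_add_right]
  linarith

theorem ConvexOn.sq_norm_gradient_sub_le {h : E → ℝ} {L : ℝ} (hL : 0 < L)
    (hc : ConvexOn ℝ univ h) (hdiff : Differentiable ℝ h)
    (hsmooth : ∀ x y, ‖gradient h x - gradient h y‖ ≤ L * ‖x - y‖) (x y : E) :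
    ‖gradient h x - gradient h y‖ ^ 2 ≤ L * ⟪gradient h x - gradient h y, x - y⟫ := by
  have hxy := hc.add_inner_add_sq_gradient_sub_le hL hdiff hsmooth x y
  have hyx := hc.add_inner_add_sq_gradient_sub_le hL hdiff hsmooth y x
  rw [norm_sub_rev] at hxy
  have hsum :
      1 / L * ‖gradient h x - gradient h y‖ ^ 2 ≤ ⟪gradient h x - gradient h y, x - y⟫ := by
    rw [← neg_sub x y, inner_neg_right] at hxy
    rw [inner_sub_left]
    have hhalf : 1 / L * ‖gradient h x - gradient h y‖ ^ 2
        = 2 * (1 / (2 * L) * ‖gradient h x - gradient h y‖ ^ 2) := by field_simp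
    linarith
  rwa [one_div, inv_mul_le_iff₀ hL] at hsum

end

theorem gradient_descent_contraction_strongly_convex_general {n : ℕ}
    (f : EuclideanSpace ℝ (Fin n) → ℝ) (L μ η : ℝ) (hμ : 0 < μ)
    (hη : 0 < η) (hη' : η ≤ 1 / L)
    (hdiff : Differentiable ℝ f)
    (hsc : StrongConvexOn Set.univ μ f)
    (hsmooth : ∀ x y, ‖gradient f x - gradient f y‖ ≤ L * ‖x - y‖) :
    ∀ x y : EuclideanSpace ℝ (Fin n),
      ‖(x - η • gradient f x) - (y - η • gradient f y)‖ ^ 2 ≤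
        (1 - η * μ) * ‖x - y‖ ^ 2 := by
  intro x y
  have hL : 0 < L := one_div_pos.mp (hη.trans_le hη')
  have hmono := hsc.mul_sq_le_inner_sub_of_hasGradientAt (mem_univ x) (mem_univ y)
    (hdiff x).hasGradientAt (hdiff y).hasGradientAt
  have hcoco := (hsc.convexOn fun r ↦ by positivity).sq_norm_gradient_sub_le hL hdiff hsmooth x y
  rw [sub_sub_sub_comm, ← smul_sub]
  exact norm_sub_smul_sq_le_of_inner_bounds hμ.le hη.le ((le_div_iff₀ hL).mp hη') hmono hcoco

/-- One-step contraction of gradient descent for an `L`-smooth `μ`-strongly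
convex function with step size `0 < η ≤ 1/L`. -/
theorem gradient_descent_contraction_strongly_convex {n : ℕ}
    (f : EuclideanSpace ℝ (Fin n) → ℝ) (L μ η : ℝ) (hL : 0 < L) (hμ : 0 < μ)
    (hη : 0 < η) (hη' : η ≤ 1 / L)
    (hdiff : Differentiable ℝ f)
    (hsc : StrongConvexOn Set.univ μ f)
    (hsmooth : ∀ x y, ‖gradient f x - gradient f y‖ ≤ L * ‖x - y‖) :
    ∀ x y : EuclideanSpace ℝ (Fin n),
      ‖(x - η • gradient f x) - (y - η • gradient f y)‖ ^ 2 ≤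
        (1 - η * μ) * ‖x - y‖ ^ 2 :=
  gradient_descent_contraction_strongly_convex_general f L μ η hμ hη hη' hdiff hsc hsmooth
end

section
/- Let f : ℝⁿ → ℝ be L-smooth with minimizer x* and let ε, δ > 0 satisfy ε ≤ 2L‖x_0 − x*‖² and δ ≤ ε/‖x_0 − x*‖. Consider the inexact gradient descent iteration x_{t+1} = x_t − (1/L)(∇f(x_t) + Δ_t) with ‖Δ_t‖ ≤ δ for all t. If T is the first index with f(x_T) − f(x*) ≤ ε, then ‖x_T − x*‖ ≤ 2‖x_0 − x*‖. -/
/-!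
While `f (x t) - f x* > ε`, the exact step `x t - ∇f (x t) / L` moves from distance
`r ≤ R := ‖x 0 - x*‖` to distance at most `R - ε / (L R)` from `x*`: expanding the square, this
is the co-coercivity inequality `f w - f x* + ‖∇f w‖² / (2L) ≤ ⟪∇f w, w - x*⟫` for convex
`L`-smooth functions. The gradient error displaces the iterate by at most `δ / L ≤ ε / (L R)`,
so by induction every iterate up to the first `ε`-accurate one stays within distance `R` of `x*`.
-/

open scoped RealInnerProductSpace

open InnerProductSpace Set

section Smooth

variable {E : Type*} [NormedAddCommGroup E] [InnerProductSpace ℝ E] [CompleteSpace E]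
  {f : E → ℝ} {L : ℝ}

theorem gradient_eq_zero_of_forall_le {xstar : E} (hmin : ∀ y, f xstar ≤ f y) :
    gradient f xstar = 0 := by
  simp [gradient, IsLocalMin.fderiv_eq_zero (Filter.Eventually.of_forall hmin)]

theorem gradient_sub_inner {x : E} (hf : DifferentiableAt ℝ f x) (c : E) :
    gradient (fun y => f y - ⟪c, y⟫) x = gradient f x - c := by
  refine HasGradientAt.gradient ?_
  rw [hasGradientAt_iff_hasFDerivAt, map_sub]
  exact hf.hasGradientAt.hasFDerivAt.sub (toDual ℝ E c).hasFDerivAt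

theorem hasDerivAt_comp_add_smul {x v : E} {t : ℝ} (hf : DifferentiableAt ℝ f (x + t • v)) :
    HasDerivAt (fun s : ℝ => f (x + s • v)) ⟪gradient f (x + t • v), v⟫ t := by
  have hline : HasDerivAt (fun s : ℝ => x + s • v) v t := by
    simpa using ((hasDerivAt_id t).smul_const v).const_add x
  rw [inner_gradient_left]
  exact hf.hasFDerivAt.comp_hasDerivAt t hline

theorem image_add_le_of_lipschitz_gradient (hf : Differentiable ℝ f)
    (hsmooth : ∀ x y, ‖gradient f x - gradient f y‖ ≤ L * ‖x - y‖) (x v : E) :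
    f (x + v) ≤ f x + ⟪gradient f x, v⟫ + L / 2 * ‖v‖ ^ 2 := by
  let g : ℝ → ℝ := fun t => f (x + t • v) - t * ⟪gradient f x, v⟫ - L / 2 * t ^ 2 * ‖v‖ ^ 2
  have hg : ∀ t, HasDerivAt g
      (⟪gradient f (x + t • v) - gradient f x, v⟫ - L * t * ‖v‖ ^ 2) t := by
    intro t
    have := ((hasDerivAt_comp_add_smul (x := x) (v := v) (hf _)).sub ((hasDerivAt_id t).mul_const
      ⟪gradient f x, v⟫)).sub (((hasDerivAt_pow 2 t).const_mul (L / 2)).mul_const (‖v‖ ^ 2))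
    refine this.congr_deriv ?_
    rw [inner_sub_left]
    push_cast
    ring
  have hg_nonpos : ∀ t ∈ Ioo (0 : ℝ) 1,
      ⟪gradient f (x + t • v) - gradient f x, v⟫ - L * t * ‖v‖ ^ 2 ≤ 0 := by
    intro t ht
    have hgrad := hsmooth (x + t • v) x
    rw [add_sub_cancel_left, norm_smul, Real.norm_of_nonneg ht.1.le] at hgrad
    have := real_inner_le_norm (gradient f (x + t • v) - gradient f x) v
    nlinarith [norm_nonneg v]
  have hanti : AntitoneOn g (Icc 0 1) :=
    antitoneOn_of_hasDerivWithinAt_nonpos (convex_Icc 0 1)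
      (fun t _ => (hg t).continuousAt.continuousWithinAt)
      (fun t _ => (hg t).hasDerivWithinAt) (by simpa only [interior_Icc] using hg_nonpos)
  have := hanti (left_mem_Icc.2 zero_le_one) (right_mem_Icc.2 zero_le_one) zero_le_one
  simp only [g, zero_smul, add_zero, one_smul, zero_mul, one_mul, sub_zero, one_pow, mul_one,
    ne_eq, OfNat.ofNat_ne_zero, not_false_eq_true, zero_pow, mul_zero] at this
  linarith

theorem le_sub_norm_gradient_sq_of_forall_le (hL : 0 < L) (hf : Differentiable ℝ f)
    (hsmooth : ∀ x y, ‖gradient f x - gradient f y‖ ≤ L * ‖x - y‖) {xstar : E}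
    (hmin : ∀ y, f xstar ≤ f y) (y : E) :
    f xstar ≤ f y - ‖gradient f y‖ ^ 2 / (2 * L) := by
  have hstep := image_add_le_of_lipschitz_gradient hf hsmooth y (-(1 / L) • gradient f y)
  rw [real_inner_smul_right, real_inner_self_eq_norm_sq, norm_smul, Real.norm_eq_abs,
    abs_neg, abs_of_pos (one_div_pos.2 hL)] at hstep
  calc f xstar ≤ f (y + -(1 / L) • gradient f y) := hmin _
    _ ≤ _ := hstep
    _ = f y - ‖gradient f y‖ ^ 2 / (2 * L) := by field_simp; ring

theorem ConvexOn.add_inner_gradient_le (hconv : ConvexOn ℝ univ f) {x : E}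
    (hf : DifferentiableAt ℝ f x) (y : E) : f x + ⟪gradient f x, y - x⟫ ≤ f y := by
  let γ : ℝ →ᵃ[ℝ] E := AffineMap.lineMap x y
  have hγ : ConvexOn ℝ univ (f ∘ γ) := by simpa using hconv.comp_affineMap γ
  have hderiv : HasDerivAt (f ∘ γ) ⟪gradient f x, y - x⟫ 0 := by
    rw [inner_gradient_left]
    exact hf.hasFDerivAt.comp_hasDerivAt_of_eq 0 AffineMap.hasDerivAt_lineMap
      (AffineMap.lineMap_apply_zero x y).symm
  have := hγ.le_slope_of_hasDerivAt (mem_univ 0) (mem_univ 1) zero_lt_one hderiv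
  simp only [slope_def_field, Function.comp, γ, AffineMap.lineMap_apply_zero,
    AffineMap.lineMap_apply_one, sub_zero, div_one] at this
  linarith

theorem ConvexOn.add_inner_gradient_add_norm_sq_le (hL : 0 < L) (hconv : ConvexOn ℝ univ f)
    (hf : Differentiable ℝ f) (hsmooth : ∀ x y, ‖gradient f x - gradient f y‖ ≤ L * ‖x - y‖)
    (x y : E) :
    f x + ⟪gradient f x, y - x⟫ + ‖gradient f y - gradient f x‖ ^ 2 / (2 * L) ≤ f y := by
  -- `φ` is `L`-smooth like `f` and, by convexity, minimal at `x`.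
  let φ : E → ℝ := fun z => f z - ⟪gradient f x, z⟫
  have hφgrad : ∀ z, gradient φ z = gradient f z - gradient f x :=
    fun z => gradient_sub_inner (hf z) _
  have hφdiff : Differentiable ℝ φ := hf.sub (innerSL ℝ (gradient f x)).differentiable
  have hφsmooth : ∀ z z', ‖gradient φ z - gradient φ z'‖ ≤ L * ‖z - z'‖ := by
    simpa only [hφgrad, sub_sub_sub_cancel_right] using hsmooth
  have hφmin : ∀ z, φ x ≤ φ z := by
    intro z
    have := hconv.add_inner_gradient_le (hf x) z
    simp only [φ, inner_sub_right] at this ⊢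
    linarith
  have := le_sub_norm_gradient_sq_of_forall_le hL hφdiff hφsmooth hφmin y
  simp only [hφgrad, φ, inner_sub_right] at this ⊢
  linarith

theorem norm_sub_smul_gradient_sub_sq_le (hL : 0 < L) (hconv : ConvexOn ℝ univ f)
    (hf : Differentiable ℝ f) (hsmooth : ∀ x y, ‖gradient f x - gradient f y‖ ≤ L * ‖x - y‖)
    {xstar : E} (hmin : ∀ y, f xstar ≤ f y) (w : E) :
    ‖w - (1 / L) • gradient f w - xstar‖ ^ 2 ≤ ‖w - xstar‖ ^ 2 - 2 * (f w - f xstar) / L := by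
  have hcoco := hconv.add_inner_gradient_add_norm_sq_le hL hf hsmooth w xstar
  rw [gradient_eq_zero_of_forall_le hmin, zero_sub, norm_neg, ← neg_sub w xstar, inner_neg_right,
    real_inner_comm] at hcoco
  rw [sub_right_comm, norm_sub_sq_real, real_inner_smul_right, norm_smul, Real.norm_eq_abs,
    abs_of_pos (one_div_pos.2 hL)]
  have hscaled := mul_le_mul_of_nonneg_left (sub_nonneg.2 hcoco) (by positivity : 0 ≤ 2 / L)
  have hL0 : L ≠ 0 := hL.ne'
  have : 2 / L * (f xstar - (f w + -⟪w - xstar, gradient f w⟫ + ‖gradient f w‖ ^ 2 / (2 * L)))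
      = 2 * (1 / L * ⟪w - xstar, gradient f w⟫) - 2 * (f w - f xstar) / L
        - (1 / L * ‖gradient f w‖) ^ 2 := by
    field_simp; ring
  linarith

theorem le_sub_div_of_sq_le_sq_sub {a c R : ℝ} (hR : 0 < R)
    (h : a ^ 2 ≤ R ^ 2 - 2 * c) : a ≤ R - c / R := by
  have hc : c ≤ R ^ 2 / 2 := by nlinarith
  have hpos : 0 ≤ R - c / R := by
    rw [sub_nonneg, div_le_iff₀ hR]; nlinarith
  refine le_of_sq_le_sq ?_ hpos
  have : (R - c / R) ^ 2 = R ^ 2 - 2 * c + (c / R) ^ 2 := by field_simp; ring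
  nlinarith [sq_nonneg (c / R)]

theorem norm_sub_smul_gradient_add_sub_le (hL : 0 < L) (hconv : ConvexOn ℝ univ f)
    (hf : Differentiable ℝ f) (hsmooth : ∀ x y, ‖gradient f x - gradient f y‖ ≤ L * ‖x - y‖)
    {xstar : E} (hmin : ∀ y, f xstar ≤ f y) {w Δ : E} {R ε : ℝ} (hR : 0 < R)
    (hw : ‖w - xstar‖ ≤ R) (hgap : ε < f w - f xstar) (hΔ : ‖Δ‖ ≤ ε / R) :
    ‖w - (1 / L) • (gradient f w + Δ) - xstar‖ ≤ R := by
  set y := w - (1 / L) • gradient f w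
  have hy : ‖y - xstar‖ ≤ R - ε / L / R := by
    refine le_sub_div_of_sq_le_sq_sub hR ?_
    calc ‖y - xstar‖ ^ 2 ≤ ‖w - xstar‖ ^ 2 - 2 * (f w - f xstar) / L :=
          norm_sub_smul_gradient_sub_sq_le hL hconv hf hsmooth hmin w
      _ ≤ R ^ 2 - 2 * (ε / L) := by
          have : 2 * (ε / L) ≤ 2 * (f w - f xstar) / L := by rw [mul_div_assoc]; gcongr
          nlinarith [pow_le_pow_left₀ (norm_nonneg _) hw 2]
  have herr : ‖(1 / L) • Δ‖ ≤ ε / L / R := by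
    rw [norm_smul, Real.norm_of_nonneg (one_div_pos.2 hL).le, div_right_comm, one_div_mul_eq_div]
    gcongr
  calc ‖w - (1 / L) • (gradient f w + Δ) - xstar‖ = ‖(y - xstar) - (1 / L) • Δ‖ := by
        rw [smul_add, ← sub_sub, sub_right_comm]
    _ ≤ ‖y - xstar‖ + ‖(1 / L) • Δ‖ := norm_sub_le _ _
    _ ≤ R := by linarith

end Smooth

theorem inexact_gd_first_accurate_iterate_bounded_general {n : ℕ}
    (f : EuclideanSpace ℝ (Fin n) → ℝ) (L ε δ : ℝ) (hL : 0 < L)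
    (hdiff : Differentiable ℝ f)
    (hconv : ConvexOn ℝ Set.univ f)
    (hsmooth : ∀ x y, ‖gradient f x - gradient f y‖ ≤ L * ‖x - y‖)
    (xstar : EuclideanSpace ℝ (Fin n))
    (hmin : ∀ y, f xstar ≤ f y)
    (x Δ : ℕ → EuclideanSpace ℝ (Fin n))
    (hx0 : x 0 ≠ xstar)
    (hδsmall : δ ≤ ε / ‖x 0 - xstar‖)
    (hΔ : ∀ t, ‖Δ t‖ ≤ δ)
    (hiter : ∀ t, x (t + 1) = x t - (1 / L) • (gradient f (x t) + Δ t))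
    (T : ℕ)
    (hTfirst : ∀ t < T, ε < f (x t) - f xstar) :
    ‖x T - xstar‖ ≤ 2 * ‖x 0 - xstar‖ := by
  have hR : 0 < ‖x 0 - xstar‖ := norm_pos_iff.2 (sub_ne_zero.2 hx0)
  have hbounded : ∀ t ≤ T, ‖x t - xstar‖ ≤ ‖x 0 - xstar‖ := by
    intro t ht
    induction t with
    | zero => exact le_rfl
    | succ t ih =>
      rw [hiter]
      exact norm_sub_smul_gradient_add_sub_le hL hconv hdiff hsmooth hmin hR (ih (by omega))
        (hTfirst t (by omega)) ((hΔ t).trans hδsmall)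
  linarith [hbounded T le_rfl]

/-- Inexact gradient descent on an `L`-smooth convex function stays bounded:
the first ε-accurate iterate is within distance `2‖x₀ − x*‖` of the optimum. -/
theorem inexact_gd_first_accurate_iterate_bounded {n : ℕ}
    (f : EuclideanSpace ℝ (Fin n) → ℝ) (L ε δ : ℝ) (hL : 0 < L)
    (hε : 0 < ε) (hδ : 0 < δ)
    (hdiff : Differentiable ℝ f)
    (hconv : ConvexOn ℝ Set.univ f)
    (hsmooth : ∀ x y, ‖gradient f x - gradient f y‖ ≤ L * ‖x - y‖)
    (xstar : EuclideanSpace ℝ (Fin n))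
    (hmin : ∀ y, f xstar ≤ f y)
    (x Δ : ℕ → EuclideanSpace ℝ (Fin n))
    (hx0 : x 0 ≠ xstar)
    (hεsmall : ε ≤ 2 * L * ‖x 0 - xstar‖ ^ 2)
    (hδsmall : δ ≤ ε / ‖x 0 - xstar‖)
    (hΔ : ∀ t, ‖Δ t‖ ≤ δ)
    (hiter : ∀ t, x (t + 1) = x t - (1 / L) • (gradient f (x t) + Δ t))
    (T : ℕ)
    (hT : f (x T) - f xstar ≤ ε)
    (hTfirst : ∀ t < T, ε < f (x t) - f xstar) :
    ‖x T - xstar‖ ≤ 2 * ‖x 0 - xstar‖ :=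
  inexact_gd_first_accurate_iterate_bounded_general f L ε δ hL hdiff hconv hsmooth xstar hmin x Δ
    hx0 hδsmall hΔ hiter T hTfirst
end

section
/- Let f : ℝⁿ → ℝ be L-smooth and μ-strongly convex with L ≥ μ > 0, and let η = 1/L. Consider two inexact gradient descent sequences x_{t+1} = x_t − η(∇f(x_t) + Δ_t) and x'_{t+1} = x'_t − η(∇f(x'_t) + Δ'_t) with x_0 = x'_0 and ‖Δ_t‖, ‖Δ'_t‖ ≤ δ for all t. Then for all t ≥ 1, ‖x_t − x'_t‖ ≤ 4δ/μ. -/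
open scoped RealInnerProductSpace

/-!
Strong convexity makes the gradient `μ`-strongly monotone, and convexity together with the
`L`-Lipschitz gradient makes it `1/L`-cocoercive. These two inequalities make the exact gradient
step `x ↦ x - ∇f x / L` a contraction with factor `√(1 - μ/L) ≤ 1 - μ/(2L)`. The gradient errors
move the two runs apart by at most `2δ/L` per step, so their distance never leaves `[0, 4δ/μ]`,
since `4δ/μ` is the fixed point of `e ↦ (1 - μ/(2L)) e + 2δ/L`.
-/

section FirstOrder

variable {E : Type*} [NormedAddCommGroup E] [InnerProductSpace ℝ E] [CompleteSpace E]
  {f : E → ℝ}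

open AffineMap

theorem HasGradientAt.hasDerivAt_comp_lineMap {g x y : E} {t : ℝ}
    (hf : HasGradientAt f g (lineMap x y t)) :
    HasDerivAt (fun s => f (lineMap x y s)) ⟪g, y - x⟫ t := by
  have := (hasGradientAt_iff_hasFDerivAt.mp hf).comp_hasDerivAt t hasDerivAt_lineMap
  simp only [InnerProductSpace.toDual_apply_apply] at this
  exact this

theorem ConvexOn.add_inner_sub_le {s : Set E} {g x y : E} (hconv : ConvexOn ℝ s f) (hx : x ∈ s)
    (hy : y ∈ s) (hf : HasGradientAt f g x) : f x + ⟪g, y - x⟫ ≤ f y := by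
  have hline : ConvexOn ℝ (lineMap x y ⁻¹' s) (fun t : ℝ => f (lineMap x y t)) :=
    hconv.comp_affineMap _
  have hderiv : HasDerivAt (fun t : ℝ => f (lineMap x y t)) ⟪g, y - x⟫ 0 :=
    HasGradientAt.hasDerivAt_comp_lineMap (by simpa using hf)
  have hslope := hline.le_slope_of_hasDerivAt (by simpa using hx) (by simpa using hy) one_pos hderiv
  simp only [slope_def_field, lineMap_apply_one, lineMap_apply_zero, sub_zero, div_one] at hslope
  linarith

theorem hasGradientAt_norm_sq (x : E) : HasGradientAt (fun w => ‖w‖ ^ 2) ((2 : ℝ) • x) x := by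
  rw [hasGradientAt_iff_hasFDerivAt]
  refine (hasStrictFDerivAt_norm_sq x).hasFDerivAt.congr_fderiv ?_
  ext w
  simp

theorem StrongConvexOn.add_inner_sub_add_le {s : Set E} {μ : ℝ} {g x y : E}
    (hsc : StrongConvexOn s μ f) (hx : x ∈ s) (hy : y ∈ s) (hf : HasGradientAt f g x) :
    f x + ⟪g, y - x⟫ + μ / 2 * ‖y - x‖ ^ 2 ≤ f y := by
  have hgrad : HasGradientAt (fun w => f w - μ / 2 * ‖w‖ ^ 2) (g - μ • x) x := by
    have := (hasGradientAt_iff_hasFDerivAt.mp hf).sub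
      ((hasGradientAt_iff_hasFDerivAt.mp (hasGradientAt_norm_sq x)).const_mul (μ / 2))
    rw [hasGradientAt_iff_hasFDerivAt]
    refine this.congr_fderiv ?_
    ext w
    simp only [map_smul, sub_apply, InnerProductSpace.toDual_apply_apply, smul_apply, smul_eq_mul,
      map_sub, sub_right_inj]
    ring
  have := (strongConvexOn_iff_convex.mp hsc).add_inner_sub_le hx hy hgrad
  have hsq : ‖y - x‖ ^ 2 = ‖y‖ ^ 2 - 2 * ⟪x, y - x⟫ - ‖x‖ ^ 2 := by
    rw [← real_inner_self_eq_norm_sq, ← real_inner_self_eq_norm_sq, ← real_inner_self_eq_norm_sq]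
    simp only [inner_sub_left, inner_sub_right, real_inner_comm x y]
    ring
  simp only [inner_sub_left, real_inner_smul_left] at this
  rw [hsq]
  linarith

theorem le_add_inner_gradient_add_sq_of_lipschitz {L : ℝ} (hf : Differentiable ℝ f)
    (hlip : ∀ u v, ‖gradient f u - gradient f v‖ ≤ L * ‖u - v‖) (x y : E) :
    f y ≤ f x + ⟪gradient f x, y - x⟫ + L / 2 * ‖y - x‖ ^ 2 := by
  set φ : ℝ → ℝ := fun s =>
    f (lineMap x y s) - s * ⟪gradient f x, y - x⟫ - L / 2 * s ^ 2 * ‖y - x‖ ^ 2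
  have hφ : ∀ s, HasDerivAt φ
      (⟪gradient f (lineMap x y s) - gradient f x, y - x⟫ - L * s * ‖y - x‖ ^ 2) s := by
    intro s
    refine HasDerivAt.congr_deriv
      ((((hf _).hasGradientAt.hasDerivAt_comp_lineMap (x := x) (y := y) (t := s)).sub
      ((hasDerivAt_id s).mul_const ⟪gradient f x, y - x⟫)).sub
      (((hasDerivAt_pow 2 s).const_mul (L / 2)).mul_const (‖y - x‖ ^ 2))) ?_
    simp only [inner_sub_left]
    ring
  have hanti : AntitoneOn φ (Set.Ici 0) := by
    refine antitoneOn_of_hasDerivWithinAt_nonpos (convex_Ici 0)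
      (fun s _ => (hφ s).continuousAt.continuousWithinAt) (fun s _ => (hφ s).hasDerivWithinAt) ?_
    intro s hs
    rw [interior_Ici, Set.mem_Ioi] at hs
    rw [sub_nonpos]
    have hdist : ‖lineMap x y s - x‖ = s * ‖y - x‖ := by
      rw [← dist_eq_norm, dist_lineMap_left, Real.norm_of_nonneg hs.le, dist_eq_norm, norm_sub_rev]
    calc ⟪gradient f (lineMap x y s) - gradient f x, y - x⟫
        ≤ ‖gradient f (lineMap x y s) - gradient f x‖ * ‖y - x‖ := real_inner_le_norm _ _
      _ ≤ L * ‖lineMap x y s - x‖ * ‖y - x‖ := by gcongr; exact hlip _ _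
      _ = L * s * ‖y - x‖ ^ 2 := by rw [hdist]; ring
  have := hanti (Set.mem_Ici.2 le_rfl) (Set.mem_Ici.2 zero_le_one) zero_le_one
  simp only [φ, lineMap_apply_zero, lineMap_apply_one] at this
  linarith

theorem ConvexOn.add_inner_gradient_add_sq_le {L : ℝ} (hconv : ConvexOn ℝ Set.univ f)
    (hf : Differentiable ℝ f) (hL : 0 < L)
    (hlip : ∀ u v, ‖gradient f u - gradient f v‖ ≤ L * ‖u - v‖) (x y : E) :
    f y + ⟪gradient f y, x - y⟫ + 1 / (2 * L) * ‖gradient f x - gradient f y‖ ^ 2 ≤ f x := by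
  set d := gradient f x - gradient f y
  -- the convexity lower bound at `y` and the descent upper bound at `x`, both evaluated at `w`
  set w := x - (1 / L) • d
  have hbelow := hconv.add_inner_sub_le (Set.mem_univ y) (Set.mem_univ w) (hf y).hasGradientAt
  have habove := le_add_inner_gradient_add_sq_of_lipschitz hf hlip x w
  have hwy : w - y = (x - y) - (1 / L) • d := by simp only [w]; abel
  have hwx : w - x = -((1 / L) • d) := by simp only [w]; abel
  rw [hwy, inner_sub_right, real_inner_smul_right] at hbelow
  rw [hwx, inner_neg_right, real_inner_smul_right, norm_neg, norm_smul, mul_pow,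
    Real.norm_of_nonneg (by positivity)] at habove
  have hd : 1 / L * ⟪gradient f x, d⟫ - 1 / L * ⟪gradient f y, d⟫ = 1 / L * ‖d‖ ^ 2 := by
    rw [← mul_sub, ← inner_sub_left, real_inner_self_eq_norm_sq]
  have hL2 : 1 / L * ‖d‖ ^ 2 = 1 / (2 * L) * ‖d‖ ^ 2 + L / 2 * ((1 / L) ^ 2 * ‖d‖ ^ 2) := by
    field_simp
    ring
  linarith

theorem ConvexOn.sq_norm_gradient_sub_le_mul_inner {L : ℝ} (hconv : ConvexOn ℝ Set.univ f)
    (hf : Differentiable ℝ f) (hL : 0 < L)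
    (hlip : ∀ u v, ‖gradient f u - gradient f v‖ ≤ L * ‖u - v‖) (x y : E) :
    ‖gradient f x - gradient f y‖ ^ 2 ≤ L * ⟪gradient f x - gradient f y, x - y⟫ := by
  have hxy := hconv.add_inner_gradient_add_sq_le hf hL hlip x y
  have hyx := hconv.add_inner_gradient_add_sq_le hf hL hlip y x
  rw [norm_sub_rev, ← neg_sub x y, inner_neg_right] at hyx
  have hhalf : 1 / L * ‖gradient f x - gradient f y‖ ^ 2
      ≤ ⟪gradient f x - gradient f y, x - y⟫ := by
    rw [inner_sub_left]
    have : 1 / L = 1 / (2 * L) + 1 / (2 * L) := by ring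
    rw [this]
    linarith
  calc ‖gradient f x - gradient f y‖ ^ 2
      = L * (1 / L * ‖gradient f x - gradient f y‖ ^ 2) := by field_simp
    _ ≤ L * ⟪gradient f x - gradient f y, x - y⟫ := by gcongr

theorem StrongConvexOn.mul_sq_norm_sub_le_inner_gradient_sub {s : Set E} {μ : ℝ} {x y : E}
    (hsc : StrongConvexOn s μ f) (hx : x ∈ s) (hy : y ∈ s)
    (hfx : DifferentiableAt ℝ f x) (hfy : DifferentiableAt ℝ f y) :
    μ * ‖x - y‖ ^ 2 ≤ ⟪gradient f x - gradient f y, x - y⟫ := by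
  have hxy := hsc.add_inner_sub_add_le hx hy hfx.hasGradientAt
  have hyx := hsc.add_inner_sub_add_le hy hx hfy.hasGradientAt
  rw [norm_sub_rev, ← neg_sub x y, inner_neg_right] at hxy
  rw [inner_sub_left]
  linarith

theorem StrongConvexOn.norm_sub_smul_gradient_sub_le {μ L : ℝ}
    (hsc : StrongConvexOn Set.univ μ f) (hμ : 0 ≤ μ) (hf : Differentiable ℝ f) (hL : 0 < L)
    (hlip : ∀ u v, ‖gradient f u - gradient f v‖ ≤ L * ‖u - v‖) (x y : E) :
    ‖(x - (1 / L) • gradient f x) - (y - (1 / L) • gradient f y)‖ ≤ √(1 - μ / L) * ‖x - y‖ := by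
  set a := x - y
  set d := gradient f x - gradient f y
  have hmono : μ * ‖a‖ ^ 2 ≤ ⟪d, a⟫ :=
    hsc.mul_sq_norm_sub_le_inner_gradient_sub (Set.mem_univ x) (Set.mem_univ y) (hf x) (hf y)
  have hcoco : ‖d‖ ^ 2 ≤ L * ⟪d, a⟫ :=
    (strongConvexOn_zero.mp (hsc.mono hμ)).sq_norm_gradient_sub_le_mul_inner hf hL hlip x y
  have hsq : ‖a - (1 / L) • d‖ ^ 2 ≤ (1 - μ / L) * ‖a‖ ^ 2 := by
    rw [norm_sub_sq_real, real_inner_smul_right, norm_smul, mul_pow,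
      Real.norm_of_nonneg (by positivity), real_inner_comm]
    have h1 : (1 / L) ^ 2 * ‖d‖ ^ 2 ≤ 1 / L * ⟪d, a⟫ := by
      calc (1 / L) ^ 2 * ‖d‖ ^ 2 ≤ (1 / L) ^ 2 * (L * ⟪d, a⟫) := by gcongr
        _ = 1 / L * ⟪d, a⟫ := by field_simp
    have h2 : μ / L * ‖a‖ ^ 2 ≤ 1 / L * ⟪d, a⟫ := by
      calc μ / L * ‖a‖ ^ 2 = 1 / L * (μ * ‖a‖ ^ 2) := by ring
        _ ≤ 1 / L * ⟪d, a⟫ := by gcongr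
    linarith
  have hstep :
      (x - (1 / L) • gradient f x) - (y - (1 / L) • gradient f y) = a - (1 / L) • d := by
    simp only [a, d, smul_sub]
    abel
  rw [hstep, ← Real.sqrt_sq (norm_nonneg (a - _)), ← Real.sqrt_sq (norm_nonneg a),
    ← Real.sqrt_mul' _ (sq_nonneg _)]
  exact Real.sqrt_le_sqrt hsq

theorem StrongConvexOn.norm_sub_smul_gradient_add_sub_le {μ L : ℝ}
    (hsc : StrongConvexOn Set.univ μ f) (hμ : 0 ≤ μ) (hf : Differentiable ℝ f) (hL : 0 < L)
    (hlip : ∀ u v, ‖gradient f u - gradient f v‖ ≤ L * ‖u - v‖) (x y e e' : E) :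
    ‖(x - (1 / L) • (gradient f x + e)) - (y - (1 / L) • (gradient f y + e'))‖
      ≤ √(1 - μ / L) * ‖x - y‖ + (‖e‖ + ‖e'‖) / L := by
  have hsplit : (x - (1 / L) • (gradient f x + e)) - (y - (1 / L) • (gradient f y + e'))
      = ((x - (1 / L) • gradient f x) - (y - (1 / L) • gradient f y)) - (1 / L) • (e - e') := by
    simp only [smul_add, smul_sub]
    abel
  have herr : ‖(1 / L) • (e - e')‖ ≤ (‖e‖ + ‖e'‖) / L := by
    rw [norm_smul, Real.norm_of_nonneg (by positivity), one_div_mul_eq_div]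
    gcongr
    exact norm_sub_le e e'
  rw [hsplit]
  exact (norm_sub_le _ _).trans
    (add_le_add (hsc.norm_sub_smul_gradient_sub_le hμ hf hL hlip x y) herr)

end FirstOrder

theorem sqrt_one_sub_le_one_sub_half {r : ℝ} (hr : r ≤ 2) : √(1 - r) ≤ 1 - r / 2 :=
  Real.sqrt_le_iff.mpr ⟨by linarith, by nlinarith [sq_nonneg r]⟩

theorem forall_le_of_le_mul_add {e : ℕ → ℝ} {ρ c B : ℝ} (hρ : 0 ≤ ρ) (hB : ρ * B + c ≤ B)
    (h0 : e 0 ≤ B) (hstep : ∀ t, e (t + 1) ≤ ρ * e t + c) : ∀ t, e t ≤ B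
  | 0 => h0
  | t + 1 => (hstep t).trans <|
    le_trans (by gcongr; exact forall_le_of_le_mul_add hρ hB h0 hstep t) hB

theorem inexact_gd_strongly_convex_deviation_general {n : ℕ}
    (f : EuclideanSpace ℝ (Fin n) → ℝ) (L μ δ : ℝ)
    (hμ : 0 < μ) (hL : μ ≤ L)
    (hdiff : Differentiable ℝ f)
    (hsc : StrongConvexOn Set.univ μ f)
    (hsmooth : ∀ x y, ‖gradient f x - gradient f y‖ ≤ L * ‖x - y‖)
    (x x' Δ Δ' : ℕ → EuclideanSpace ℝ (Fin n))
    (hx0 : x 0 = x' 0)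
    (hΔ : ∀ t, ‖Δ t‖ ≤ δ) (hΔ' : ∀ t, ‖Δ' t‖ ≤ δ)
    (hx : ∀ t, x (t + 1) = x t - (1 / L) • (gradient f (x t) + Δ t))
    (hx' : ∀ t, x' (t + 1) = x' t - (1 / L) • (gradient f (x' t) + Δ' t)) :
    ∀ t : ℕ, 1 ≤ t → ‖x t - x' t‖ ≤ 4 * δ / μ := by
  have hL0 : 0 < L := hμ.trans_le hL
  have hδ : 0 ≤ δ := (norm_nonneg _).trans (hΔ 0)
  have hstep : ∀ t, ‖x (t + 1) - x' (t + 1)‖ ≤ √(1 - μ / L) * ‖x t - x' t‖ + 2 * δ / L := by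
    intro t
    rw [hx, hx']
    refine (hsc.norm_sub_smul_gradient_add_sub_le hμ.le hdiff hL0 hsmooth _ _ _ _).trans ?_
    gcongr
    linarith [hΔ t, hΔ' t]
  have hbound : √(1 - μ / L) * (4 * δ / μ) + 2 * δ / L ≤ 4 * δ / μ :=
    calc √(1 - μ / L) * (4 * δ / μ) + 2 * δ / L
        ≤ (1 - μ / L / 2) * (4 * δ / μ) + 2 * δ / L := by
          gcongr
          exact sqrt_one_sub_le_one_sub_half (by rw [div_le_iff₀ hL0]; linarith)
      _ = 4 * δ / μ := by field_simp; ring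
  have hstart : ‖x 0 - x' 0‖ ≤ 4 * δ / μ := by
    rw [hx0, sub_self, norm_zero]
    positivity
  exact fun t _ =>
    forall_le_of_le_mul_add (e := fun t => ‖x t - x' t‖) (Real.sqrt_nonneg _) hbound hstart hstep t

/-- Two runs of inexact gradient descent on an `L`-smooth `μ`-strongly convex
function from the same initialization stay within `4δ/μ` of each other. -/
theorem inexact_gd_strongly_convex_deviation {n : ℕ}
    (f : EuclideanSpace ℝ (Fin n) → ℝ) (L μ δ : ℝ)
    (hμ : 0 < μ) (hL : μ ≤ L) (hδ : 0 ≤ δ)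
    (hdiff : Differentiable ℝ f)
    (hsc : StrongConvexOn Set.univ μ f)
    (hsmooth : ∀ x y, ‖gradient f x - gradient f y‖ ≤ L * ‖x - y‖)
    (x x' Δ Δ' : ℕ → EuclideanSpace ℝ (Fin n))
    (hx0 : x 0 = x' 0)
    (hΔ : ∀ t, ‖Δ t‖ ≤ δ) (hΔ' : ∀ t, ‖Δ' t‖ ≤ δ)
    (hx : ∀ t, x (t + 1) = x t - (1 / L) • (gradient f (x t) + Δ t))
    (hx' : ∀ t, x' (t + 1) = x' t - (1 / L) • (gradient f (x' t) + Δ' t)) :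
    ∀ t : ℕ, 1 ≤ t → ‖x t - x' t‖ ≤ 4 * δ / μ :=
  inexact_gd_strongly_convex_deviation_general f L μ δ hμ hL hdiff hsc hsmooth x x' Δ Δ' hx0 hΔ hΔ'
    hx hx'
end
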